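/- For every k ∈ {2, 4, 6, 14}, the graph Σ is k-equivalent to the complete bipartite graph K_{2,3}: 𝔞_k^{Σ} = 𝔞_k^{K_{2,3}}, where Σ is the graph on {1,2,3,4,5} with edges {1,2},{2,3},{3,4},{2,5}, and K_{2,3} is Σ with the two additional edges {1,4} and {4,5} (the complete bipartite graph with parts {2,4} and {1,3,5}). -/

import Mathlib

/-!
If `P` and `Q` are anticommuting Pauli strings then `⁅i P, i Q⁆ = ± 2 i P Q`, so a dynamical Lie
algebra contains `i P Q` whenever it contains `i P` and `i Q`. Starting from the generators on
the edges of the fork `Σ` (the path `1 - 2 - 3 - 4` with the extra leaf `5` at `2`), explicit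
chains of such products reach the generators on the edge `{1, 4}`, for `k = 2, 4, 6`, and hence
for `k = 14` since `𝒜_14 = 𝒜_2 ∪ 𝒜_4`. Doing this for any graph into which `Σ` embeds, once
for the identity and once for the automorphism of `Σ` exchanging `1` and `5` (now inside
`Σ ⊔ {1, 4}`), adds the two edges `{1, 4}` and `{4, 5}` of `K_{2,3}` one at a time.
-/

open Matrix DirectSum

attribute [local instance 100] LieRing.ofAssociativeRing

noncomputable section

/-- The identity Pauli matrix `I`. -/
def PauliI : Matrix (Fin 2) (Fin 2) ℂ := 1

/-- The Pauli matrix `X`. -/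
def PauliX : Matrix (Fin 2) (Fin 2) ℂ := !![0, 1; 1, 0]

/-- The Pauli matrix `Y`. -/
def PauliY : Matrix (Fin 2) (Fin 2) ℂ := !![0, -Complex.I; Complex.I, 0]

/-- The Pauli matrix `Z`. -/
def PauliZ : Matrix (Fin 2) (Fin 2) ℂ := !![1, 0; 0, -1]

/-- The `n`-fold Kronecker product of the 2×2 matrices `A 0, …, A (n-1)`, realized as a
matrix indexed by `Fin n → Fin 2` (a type of cardinality `2^n`). -/
def pauliString {n : ℕ} (A : Fin n → Matrix (Fin 2) (Fin 2) ℂ) :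
    Matrix (Fin n → Fin 2) (Fin n → Fin 2) ℂ :=
  Matrix.of fun x y => ∏ k, A k (x k) (y k)

/-- The Pauli string `A_i B_j` with `A` at site `i`, `B` at site `j`, and identity elsewhere. -/
def twoLocal {n : ℕ} (A B : Matrix (Fin 2) (Fin 2) ℂ) (i j : Fin n) :
    Matrix (Fin n → Fin 2) (Fin n → Fin 2) ℂ :=
  pauliString (fun k => if k = i then A else if k = j then B else PauliI)

/-- The Pauli string `A_i` with `A` at site `i` and identity elsewhere. -/
def oneLocal {n : ℕ} (A : Matrix (Fin 2) (Fin 2) ℂ) (i : Fin n) :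
    Matrix (Fin n → Fin 2) (Fin n → Fin 2) ℂ :=
  pauliString (fun k => if k = i then A else PauliI)

/-- The generating sets `𝒜_k` (a pair `(a, b)` stands for `a ⊗ b`). -/
def genSet : ℕ → Set (Matrix (Fin 2) (Fin 2) ℂ × Matrix (Fin 2) (Fin 2) ℂ)
  | 2 => {(PauliX, PauliY), (PauliY, PauliX)}
  | 4 => {(PauliX, PauliX), (PauliY, PauliY)}
  | 6 => {(PauliX, PauliX), (PauliY, PauliZ), (PauliZ, PauliY)}
  | 7 => {(PauliX, PauliX), (PauliY, PauliY), (PauliZ, PauliZ)}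
  | 14 => {(PauliX, PauliX), (PauliY, PauliY), (PauliX, PauliY), (PauliY, PauliX)}
  | 16 => {(PauliX, PauliY), (PauliY, PauliX), (PauliY, PauliZ), (PauliZ, PauliY)}
  | 20 => {(PauliX, PauliX), (PauliY, PauliY), (PauliY, PauliZ), (PauliZ, PauliY)}
  | 22 => {(PauliX, PauliX), (PauliX, PauliY), (PauliY, PauliX), (PauliX, PauliZ), (PauliZ, PauliX)}
  | _ => ∅

/-- The dynamical Lie algebra `𝔞_k^G`: the smallest real Lie subalgebra of the `2^n × 2^n`
complex matrices containing `i·(a_i · b_j)` for every edge `{i, j}` of `G` and every pair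
`(a, b)` with `a ⊗ b ∈ 𝒜_k`. -/
def dla (k : ℕ) {n : ℕ} (G : SimpleGraph (Fin n)) :
    LieSubalgebra ℝ (Matrix (Fin n → Fin 2) (Fin n → Fin 2) ℂ) :=
  LieSubalgebra.lieSpan ℝ _
    {M | ∃ i j : Fin n, G.Adj i j ∧ ∃ p ∈ genSet k, M = Complex.I • twoLocal p.1 p.2 i j}

/-- The graph `Σ` on `{1, …, 5}` (realized as `Fin 5`, vertex `v` being index `v - 1`)
with edges `{1,2}, {2,3}, {3,4}, {2,5}`. -/
def sigmaGraph : SimpleGraph (Fin 5) :=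
  SimpleGraph.fromRel (fun i j =>
    (i, j) ∈ ({(0, 1), (1, 2), (2, 3), (1, 4)} : Set (Fin 5 × Fin 5)))

/-- The complete bipartite graph `K_{2,3}` with parts `{2, 4}` and `{1, 3, 5}`: the graph `Σ`
together with the two additional edges `{1, 4}` and `{4, 5}`. -/
def K23Graph : SimpleGraph (Fin 5) :=
  SimpleGraph.fromRel (fun i j =>
    (i, j) ∈ ({(0, 1), (1, 2), (2, 3), (1, 4), (0, 3), (3, 4)} : Set (Fin 5 × Fin 5)))

/-- Pauli labels: `0, 1, 2, 3` stand for `I, X, Y, Z`. -/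
def pauli : Fin 4 → Matrix (Fin 2) (Fin 2) ℂ := ![PauliI, PauliX, PauliY, PauliZ]

def pauliMul : Fin 4 → Fin 4 → Fin 4 :=
  ![![0, 1, 2, 3], ![1, 0, 3, 2], ![2, 3, 0, 1], ![3, 2, 1, 0]]

def pauliPhase : Fin 4 → Fin 4 → ℕ :=
  ![![0, 0, 0, 0], ![0, 0, 1, 3], ![0, 3, 0, 1], ![0, 1, 3, 0]]

theorem pauli_mul_pauli (a b : Fin 4) :
    pauli a * pauli b = Complex.I ^ pauliPhase a b • pauli (pauliMul a b) := by
  fin_cases a <;> fin_cases b <;> ext i j <;> fin_cases i <;> fin_cases j <;>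
    simp [pauli, pauliMul, pauliPhase, PauliI, PauliX, PauliY, PauliZ, Matrix.mul_apply,
      Fin.sum_univ_two, pow_succ]

theorem pauliMul_comm (a b : Fin 4) : pauliMul a b = pauliMul b a := by
  revert a b; decide

theorem four_dvd_pauliPhase_add_pauliPhase (a b : Fin 4) :
    4 ∣ pauliPhase a b + pauliPhase b a := by
  revert a b; decide

section PauliString

variable {n : ℕ}

theorem pauliString_mul (A B : Fin n → Matrix (Fin 2) (Fin 2) ℂ) :
    pauliString A * pauliString B = pauliString fun k => A k * B k := by
  ext x y
  simp only [pauliString, Matrix.mul_apply, Matrix.of_apply]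
  rw [Finset.prod_univ_sum, Fintype.piFinset_univ]
  exact Finset.sum_congr rfl fun z _ => Finset.prod_mul_distrib.symm

theorem pauliString_smul (c : Fin n → ℂ) (A : Fin n → Matrix (Fin 2) (Fin 2) ℂ) :
    pauliString (fun k => c k • A k) = (∏ k, c k) • pauliString A := by
  ext x y
  simp [pauliString, Finset.prod_mul_distrib]

theorem pauliString_pauli_mul (F G : Fin n → Fin 4) :
    pauliString (fun k => pauli (F k)) * pauliString (fun k => pauli (G k)) =
      Complex.I ^ (∑ k, pauliPhase (F k) (G k)) •
        pauliString fun k => pauli (pauliMul (F k) (G k)) := by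
  simp only [pauliString_mul, pauli_mul_pauli, pauliString_smul, Finset.prod_pow_eq_pow_sum]

theorem I_pow_odd_of_four_dvd_add {c₁ c₂ m : ℕ} (hm : c₁ = 2 * m + 1) (h4 : 4 ∣ c₁ + c₂) :
    Complex.I ^ c₁ = (-1) ^ m * Complex.I ∧ Complex.I ^ c₂ = -((-1) ^ m * Complex.I) := by
  have h₁ : Complex.I ^ c₁ = (-1) ^ m * Complex.I := by
    rw [hm, pow_succ, pow_mul, Complex.I_sq]
  obtain ⟨t, ht⟩ := h4
  have hprod : Complex.I ^ c₁ * Complex.I ^ c₂ = 1 := by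
    rw [← pow_add, ht, pow_mul, Complex.I_pow_four, one_pow]
  have hsq : ((-1 : ℂ) ^ m * Complex.I) ^ 2 = -1 := by
    rw [mul_pow, ← pow_mul, mul_comm m, pow_mul, neg_one_sq, one_pow, Complex.I_sq, one_mul]
  rw [h₁] at hprod
  refine ⟨h₁, ?_⟩
  linear_combination (-((-1 : ℂ) ^ m * Complex.I)) * hprod + Complex.I ^ c₂ * hsq

/-- The phase sum is odd exactly when the two Pauli strings anticommute; the bracket of their
`i`-multiples is then `± 2 i` times their product. -/
theorem I_smul_pauliString_mem_of_odd
    (S : LieSubalgebra ℝ (Matrix (Fin n → Fin 2) (Fin n → Fin 2) ℂ)) {F G : Fin n → Fin 4}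
    (hF : Complex.I • pauliString (fun k => pauli (F k)) ∈ S)
    (hG : Complex.I • pauliString (fun k => pauli (G k)) ∈ S)
    (hodd : Odd (∑ k, pauliPhase (F k) (G k))) :
    Complex.I • pauliString (fun k => pauli (pauliMul (F k) (G k))) ∈ S := by
  obtain ⟨m, hm⟩ := hodd
  have h4 : 4 ∣ ∑ k, pauliPhase (F k) (G k) + ∑ k, pauliPhase (G k) (F k) := by
    rw [← Finset.sum_add_distrib]
    exact Finset.dvd_sum fun k _ => four_dvd_pauliPhase_add_pauliPhase _ _
  obtain ⟨h₁, h₂⟩ := I_pow_odd_of_four_dvd_add hm h4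
  set P := pauliString fun k => pauli (pauliMul (F k) (G k))
  have hbracket : ⁅Complex.I • pauliString (fun k => pauli (F k)),
      Complex.I • pauliString (fun k => pauli (G k))⁆ = (-2 * (-1) ^ m : ℝ) • Complex.I • P := by
    rw [Ring.lie_def, smul_mul_smul_comm, smul_mul_smul_comm, pauliString_pauli_mul,
      pauliString_pauli_mul, h₁, h₂]
    simp only [pauliMul_comm (G _), P]
    rw [← Complex.coe_smul]
    simp only [smul_smul, ← sub_smul]
    congr 1
    push_cast
    linear_combination (2 * (-1) ^ m * Complex.I) * Complex.I_sq
  have hr : (-2 * (-1) ^ m : ℝ) ≠ 0 := by simp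
  have hmem := S.smul_mem (-2 * (-1) ^ m : ℝ)⁻¹ (S.lie_mem hF hG)
  rwa [hbracket, smul_smul, inv_mul_cancel₀ hr, one_smul] at hmem

end PauliString

section Labels

variable {m n : ℕ} (e : Fin m ↪ Fin n)

def labelSet (S : LieSubalgebra ℝ (Matrix (Fin n → Fin 2) (Fin n → Fin 2) ℂ)) :
    Set (Fin m → Fin 4) :=
  {f | Complex.I • pauliString (fun k => pauli (Function.extend e f 0 k)) ∈ S}

def IsAnticommProduct (f g h : Fin m → Fin 4) : Prop :=
  Odd (∑ l, pauliPhase (f l) (g l)) ∧ ∀ l, pauliMul (f l) (g l) = h l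

instance (f g h : Fin m → Fin 4) : Decidable (IsAnticommProduct f g h) := by
  unfold IsAnticommProduct; infer_instance

theorem extend_pauliMul (f g : Fin m → Fin 4) (k : Fin n) :
    Function.extend e (fun l => pauliMul (f l) (g l)) 0 k =
      pauliMul (Function.extend e f 0 k) (Function.extend e g 0 k) := by
  by_cases hk : ∃ l, e l = k
  · obtain ⟨l, rfl⟩ := hk
    simp only [e.injective.extend_apply]
  · simp only [Function.extend_apply' _ _ _ hk]
    rfl

theorem sum_pauliPhase_extend (f g : Fin m → Fin 4) :
    ∑ k, pauliPhase (Function.extend e f 0 k) (Function.extend e g 0 k) =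
      ∑ l, pauliPhase (f l) (g l) := by
  refine (Fintype.sum_of_injective e e.injective _ _ (fun k hk => ?_) fun l => ?_).symm
  · simp only [Function.extend_apply' _ _ _ hk]
    rfl
  · simp only [e.injective.extend_apply]

variable {e}

theorem mem_labelSet_of_isAnticommProduct
    {S : LieSubalgebra ℝ (Matrix (Fin n → Fin 2) (Fin n → Fin 2) ℂ)} {f g h : Fin m → Fin 4}
    (hf : f ∈ labelSet e S) (hg : g ∈ labelSet e S)
    (hfgh : IsAnticommProduct f g h := by decide) : h ∈ labelSet e S := by
  obtain ⟨hodd, rfl⟩ : Odd (∑ l, pauliPhase (f l) (g l)) ∧ (fun l => pauliMul (f l) (g l)) = h :=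
    ⟨hfgh.1, funext hfgh.2⟩
  have := I_smul_pauliString_mem_of_odd S hf hg (by rwa [sum_pauliPhase_extend])
  simpa only [labelSet, Set.mem_ofPred_eq, extend_pauliMul] using this

theorem twoLocal_pauli_eq_pauliString_extend {f : Fin m → Fin 4} {i j : Fin m}
    (hf : ∀ l, l ≠ i → l ≠ j → f l = 0) :
    twoLocal (pauli (f i)) (pauli (f j)) (e i) (e j) =
      pauliString fun k => pauli (Function.extend e f 0 k) := by
  unfold twoLocal
  congr 1
  funext k
  by_cases hk : ∃ l, e l = k
  · obtain ⟨l, rfl⟩ := hk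
    simp only [e.injective.extend_apply, e.injective.eq_iff]
    split_ifs with hi hj
    · rw [hi]
    · rw [hj]
    · rw [hf l hi hj]; rfl
  · have hi : k ≠ e i := fun h => hk ⟨i, h.symm⟩
    have hj : k ≠ e j := fun h => hk ⟨j, h.symm⟩
    simp only [Function.extend_apply' _ _ _ hk, if_neg hi, if_neg hj]
    rfl

theorem I_smul_twoLocal_mem_of_mem_labelSet
    {S : LieSubalgebra ℝ (Matrix (Fin n → Fin 2) (Fin n → Fin 2) ℂ)} {f : Fin m → Fin 4}
    (hfS : f ∈ labelSet e S) {i j : Fin m}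
    (hf : ∀ l, l ≠ i → l ≠ j → f l = 0 := by decide) :
    Complex.I • twoLocal (pauli (f i)) (pauli (f j)) (e i) (e j) ∈ S := by
  rwa [twoLocal_pauli_eq_pauliString_extend hf]

theorem mem_labelSet_dla_of_adj {k : ℕ} {G : SimpleGraph (Fin n)} {f : Fin m → Fin 4} {i j : Fin m}
    (hadj : G.Adj (e i) (e j))
    (hp : (pauli (f i), pauli (f j)) ∈ genSet k := by simp [genSet, pauli])
    (hf : ∀ l, l ≠ i → l ≠ j → f l = 0 := by decide) : f ∈ labelSet e (dla k G) := by
  show _ ∈ dla k G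
  rw [← twoLocal_pauli_eq_pauliString_extend hf]
  exact LieSubalgebra.subset_lieSpan ⟨e i, e j, hadj, _, hp, rfl⟩

end Labels

-- The chains were found by a breadth-first search; each hypothesis is named after its Pauli
-- string, e.g. `yziix` is `Y ⊗ Z ⊗ I ⊗ I ⊗ X`.
theorem twoLocal_mem_dla_two_of_fork {n : ℕ} {G : SimpleGraph (Fin n)} {e : Fin 5 ↪ Fin n}
    (h01 : G.Adj (e 0) (e 1)) (h12 : G.Adj (e 1) (e 2)) (h23 : G.Adj (e 2) (e 3))
    (h14 : G.Adj (e 1) (e 4)) :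
    ∀ p ∈ genSet 2, Complex.I • twoLocal p.1 p.2 (e 0) (e 3) ∈ dla 2 G ∧
      Complex.I • twoLocal p.1 p.2 (e 3) (e 0) ∈ dla 2 G := by
  set T := labelSet e (dla 2 G)
  have yxiii : ![2, 1, 0, 0, 0] ∈ T := mem_labelSet_dla_of_adj h01
  have iyiix : ![0, 2, 0, 0, 1] ∈ T := mem_labelSet_dla_of_adj h14
  have yziix : ![2, 3, 0, 0, 1] ∈ T := mem_labelSet_of_isAnticommProduct yxiii iyiix
  have ixyii : ![0, 1, 2, 0, 0] ∈ T := mem_labelSet_dla_of_adj h12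
  have yyyix : ![2, 2, 2, 0, 1] ∈ T := mem_labelSet_of_isAnticommProduct ixyii yziix
  have iyxii : ![0, 2, 1, 0, 0] ∈ T := mem_labelSet_dla_of_adj h12
  have yizix : ![2, 0, 3, 0, 1] ∈ T := mem_labelSet_of_isAnticommProduct iyxii yyyix
  have iixyi : ![0, 0, 1, 2, 0] ∈ T := mem_labelSet_dla_of_adj h23
  have yyzyx : ![2, 2, 3, 2, 1] ∈ T := mem_labelSet_of_isAnticommProduct iixyi yyyix
  have xyiii : ![1, 2, 0, 0, 0] ∈ T := mem_labelSet_dla_of_adj h01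
  have zizyx : ![3, 0, 3, 2, 1] ∈ T := mem_labelSet_of_isAnticommProduct xyiii yyzyx
  have xiiyi : ![1, 0, 0, 2, 0] ∈ T := mem_labelSet_of_isAnticommProduct yizix zizyx
  have ixiiy : ![0, 1, 0, 0, 2] ∈ T := mem_labelSet_dla_of_adj h14
  have izxiy : ![0, 3, 1, 0, 2] ∈ T := mem_labelSet_of_isAnticommProduct iyxii ixiiy
  have xxxiy : ![1, 1, 1, 0, 2] ∈ T := mem_labelSet_of_isAnticommProduct xyiii izxiy
  have zixiy : ![3, 0, 1, 0, 2] ∈ T := mem_labelSet_of_isAnticommProduct yxiii xxxiy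
  have iiyxi : ![0, 0, 2, 1, 0] ∈ T := mem_labelSet_dla_of_adj h23
  have xxzxy : ![1, 1, 3, 1, 2] ∈ T := mem_labelSet_of_isAnticommProduct iiyxi xxxiy
  have xixxy : ![1, 0, 1, 1, 2] ∈ T := mem_labelSet_of_isAnticommProduct ixyii xxzxy
  have yiixi : ![2, 0, 0, 1, 0] ∈ T := mem_labelSet_of_isAnticommProduct zixiy xixxy
  rintro p (rfl | rfl)
  · exact ⟨I_smul_twoLocal_mem_of_mem_labelSet xiiyi, I_smul_twoLocal_mem_of_mem_labelSet yiixi⟩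
  · exact ⟨I_smul_twoLocal_mem_of_mem_labelSet yiixi, I_smul_twoLocal_mem_of_mem_labelSet xiiyi⟩

theorem twoLocal_mem_dla_four_of_fork {n : ℕ} {G : SimpleGraph (Fin n)} {e : Fin 5 ↪ Fin n}
    (h01 : G.Adj (e 0) (e 1)) (h12 : G.Adj (e 1) (e 2)) (h23 : G.Adj (e 2) (e 3))
    (h14 : G.Adj (e 1) (e 4)) :
    ∀ p ∈ genSet 4, Complex.I • twoLocal p.1 p.2 (e 0) (e 3) ∈ dla 4 G ∧
      Complex.I • twoLocal p.1 p.2 (e 3) (e 0) ∈ dla 4 G := by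
  set T := labelSet e (dla 4 G)
  have iyyii : ![0, 2, 2, 0, 0] ∈ T := mem_labelSet_dla_of_adj h12
  have ixiix : ![0, 1, 0, 0, 1] ∈ T := mem_labelSet_dla_of_adj h14
  have izyix : ![0, 3, 2, 0, 1] ∈ T := mem_labelSet_of_isAnticommProduct iyyii ixiix
  have yyiii : ![2, 2, 0, 0, 0] ∈ T := mem_labelSet_dla_of_adj h01
  have yxyix : ![2, 1, 2, 0, 1] ∈ T := mem_labelSet_of_isAnticommProduct yyiii izyix
  have ixxii : ![0, 1, 1, 0, 0] ∈ T := mem_labelSet_dla_of_adj h12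
  have yizix : ![2, 0, 3, 0, 1] ∈ T := mem_labelSet_of_isAnticommProduct ixxii yxyix
  have xxiii : ![1, 1, 0, 0, 0] ∈ T := mem_labelSet_dla_of_adj h01
  have ziyix : ![3, 0, 2, 0, 1] ∈ T := mem_labelSet_of_isAnticommProduct xxiii yxyix
  have iixxi : ![0, 0, 1, 1, 0] ∈ T := mem_labelSet_dla_of_adj h23
  have zizxx : ![3, 0, 3, 1, 1] ∈ T := mem_labelSet_of_isAnticommProduct iixxi ziyix
  have xiixi : ![1, 0, 0, 1, 0] ∈ T := mem_labelSet_of_isAnticommProduct yizix zizxx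
  have iyiiy : ![0, 2, 0, 0, 2] ∈ T := mem_labelSet_dla_of_adj h14
  have xziiy : ![1, 3, 0, 0, 2] ∈ T := mem_labelSet_of_isAnticommProduct xxiii iyiiy
  have xyxiy : ![1, 2, 1, 0, 2] ∈ T := mem_labelSet_of_isAnticommProduct ixxii xziiy
  have zixiy : ![3, 0, 1, 0, 2] ∈ T := mem_labelSet_of_isAnticommProduct yyiii xyxiy
  have xiziy : ![1, 0, 3, 0, 2] ∈ T := mem_labelSet_of_isAnticommProduct iyyii xyxiy
  have iiyyi : ![0, 0, 2, 2, 0] ∈ T := mem_labelSet_dla_of_adj h23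
  have xixyy : ![1, 0, 1, 2, 2] ∈ T := mem_labelSet_of_isAnticommProduct iiyyi xiziy
  have yiiyi : ![2, 0, 0, 2, 0] ∈ T := mem_labelSet_of_isAnticommProduct zixiy xixyy
  rintro p (rfl | rfl)
  · exact ⟨I_smul_twoLocal_mem_of_mem_labelSet xiixi, I_smul_twoLocal_mem_of_mem_labelSet xiixi⟩
  · exact ⟨I_smul_twoLocal_mem_of_mem_labelSet yiiyi, I_smul_twoLocal_mem_of_mem_labelSet yiiyi⟩

theorem twoLocal_mem_dla_six_of_fork {n : ℕ} {G : SimpleGraph (Fin n)} {e : Fin 5 ↪ Fin n}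
    (h01 : G.Adj (e 0) (e 1)) (h12 : G.Adj (e 1) (e 2)) (h23 : G.Adj (e 2) (e 3)) :
    ∀ p ∈ genSet 6, Complex.I • twoLocal p.1 p.2 (e 0) (e 3) ∈ dla 6 G ∧
      Complex.I • twoLocal p.1 p.2 (e 3) (e 0) ∈ dla 6 G := by
  set T := labelSet e (dla 6 G)
  have iyzii : ![0, 2, 3, 0, 0] ∈ T := mem_labelSet_dla_of_adj h12
  have iiyzi : ![0, 0, 2, 3, 0] ∈ T := mem_labelSet_dla_of_adj h23
  have iyxzi : ![0, 2, 1, 3, 0] ∈ T := mem_labelSet_of_isAnticommProduct iyzii iiyzi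
  have izyii : ![0, 3, 2, 0, 0] ∈ T := mem_labelSet_dla_of_adj h12
  have iizyi : ![0, 0, 3, 2, 0] ∈ T := mem_labelSet_dla_of_adj h23
  have izxyi : ![0, 3, 1, 2, 0] ∈ T := mem_labelSet_of_isAnticommProduct izyii iizyi
  have xxiii : ![1, 1, 0, 0, 0] ∈ T := mem_labelSet_dla_of_adj h01
  have xyxyi : ![1, 2, 1, 2, 0] ∈ T := mem_labelSet_of_isAnticommProduct xxiii izxyi
  have xiixi : ![1, 0, 0, 1, 0] ∈ T := mem_labelSet_of_isAnticommProduct iyxzi xyxyi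
  have iixxi : ![0, 0, 1, 1, 0] ∈ T := mem_labelSet_dla_of_adj h23
  have izizi : ![0, 3, 0, 3, 0] ∈ T := mem_labelSet_of_isAnticommProduct iixxi izxyi
  have zyiii : ![3, 2, 0, 0, 0] ∈ T := mem_labelSet_dla_of_adj h01
  have zxizi : ![3, 1, 0, 3, 0] ∈ T := mem_labelSet_of_isAnticommProduct zyiii izizi
  have yiizi : ![2, 0, 0, 3, 0] ∈ T := mem_labelSet_of_isAnticommProduct xxiii zxizi
  have yziii : ![2, 3, 0, 0, 0] ∈ T := mem_labelSet_dla_of_adj h01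
  have ixxii : ![0, 1, 1, 0, 0] ∈ T := mem_labelSet_dla_of_adj h12
  have yyxii : ![2, 2, 1, 0, 0] ∈ T := mem_labelSet_of_isAnticommProduct yziii ixxii
  have ziiyi : ![3, 0, 0, 2, 0] ∈ T := mem_labelSet_of_isAnticommProduct yyxii xyxyi
  rintro p (rfl | rfl | rfl)
  · exact ⟨I_smul_twoLocal_mem_of_mem_labelSet xiixi, I_smul_twoLocal_mem_of_mem_labelSet xiixi⟩
  · exact ⟨I_smul_twoLocal_mem_of_mem_labelSet yiizi, I_smul_twoLocal_mem_of_mem_labelSet ziiyi⟩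
  · exact ⟨I_smul_twoLocal_mem_of_mem_labelSet ziiyi, I_smul_twoLocal_mem_of_mem_labelSet yiizi⟩

theorem dla_mono {k n : ℕ} {G H : SimpleGraph (Fin n)} (hGH : G ≤ H) : dla k G ≤ dla k H :=
  LieSubalgebra.lieSpan_mono fun _ ⟨i, j, hij, p, hp, hM⟩ => ⟨i, j, hGH hij, p, hp, hM⟩

theorem dla_le_dla_of_genSet_subset {k k' n : ℕ} {G : SimpleGraph (Fin n)}
    (h : genSet k ⊆ genSet k') : dla k G ≤ dla k' G :=
  LieSubalgebra.lieSpan_mono fun _ ⟨i, j, hij, p, hp, hM⟩ => ⟨i, j, hij, p, h hp, hM⟩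

theorem genSet_fourteen : genSet 14 = genSet 2 ∪ genSet 4 := by
  ext p
  simp only [genSet, Set.mem_union, Set.mem_insert_iff, Set.mem_singleton_iff]
  tauto

theorem twoLocal_mem_dla_of_fork {k n : ℕ} (hk : k ∈ ({2, 4, 6, 14} : Set ℕ))
    {G : SimpleGraph (Fin n)} {e : Fin 5 ↪ Fin n} (h01 : G.Adj (e 0) (e 1))
    (h12 : G.Adj (e 1) (e 2)) (h23 : G.Adj (e 2) (e 3)) (h14 : G.Adj (e 1) (e 4)) :
    ∀ p ∈ genSet k, Complex.I • twoLocal p.1 p.2 (e 0) (e 3) ∈ dla k G ∧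
      Complex.I • twoLocal p.1 p.2 (e 3) (e 0) ∈ dla k G := by
  rcases hk with rfl | rfl | rfl | rfl
  · exact twoLocal_mem_dla_two_of_fork h01 h12 h23 h14
  · exact twoLocal_mem_dla_four_of_fork h01 h12 h23 h14
  · exact twoLocal_mem_dla_six_of_fork h01 h12 h23
  · rw [genSet_fourteen]
    have h2 : genSet 2 ⊆ genSet 14 := genSet_fourteen ▸ Set.subset_union_left
    have h4 : genSet 4 ⊆ genSet 14 := genSet_fourteen ▸ Set.subset_union_right
    rintro p (hp | hp)
    · exact (twoLocal_mem_dla_two_of_fork h01 h12 h23 h14 p hp).imp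
        (dla_le_dla_of_genSet_subset h2 ·) (dla_le_dla_of_genSet_subset h2 ·)
    · exact (twoLocal_mem_dla_four_of_fork h01 h12 h23 h14 p hp).imp
        (dla_le_dla_of_genSet_subset h4 ·) (dla_le_dla_of_genSet_subset h4 ·)

theorem dla_sup_edge_eq_of_sigmaGraph_le_comap {k n : ℕ} (hk : k ∈ ({2, 4, 6, 14} : Set ℕ))
    {G : SimpleGraph (Fin n)} (e : Fin 5 ↪ Fin n) (hG : sigmaGraph ≤ G.comap e) :
    dla k (G ⊔ SimpleGraph.edge (e 0) (e 3)) = dla k G := by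
  have adj (i j : Fin 5) (hij : sigmaGraph.Adj i j := by simp [sigmaGraph]) :
      G.Adj (e i) (e j) := hG hij
  have hfork := twoLocal_mem_dla_of_fork hk (adj 0 1) (adj 1 2) (adj 2 3) (adj 1 4)
  refine le_antisymm (LieSubalgebra.lieSpan_le.mpr ?_) (dla_mono le_sup_left)
  rintro _ ⟨i, j, hij, p, hp, rfl⟩
  rw [SimpleGraph.sup_adj, SimpleGraph.edge_adj] at hij
  rcases hij with hij | ⟨⟨rfl, rfl⟩ | ⟨rfl, rfl⟩, -⟩
  · exact LieSubalgebra.subset_lieSpan ⟨i, j, hij, p, hp, rfl⟩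
  · exact (hfork p hp).1
  · exact (hfork p hp).2

theorem K23Graph_eq_sup_edge :
    K23Graph = sigmaGraph ⊔ SimpleGraph.edge 0 3 ⊔ SimpleGraph.edge 4 3 := by
  ext i j
  simp only [K23Graph, sigmaGraph, SimpleGraph.sup_adj, SimpleGraph.edge_adj,
    SimpleGraph.fromRel_adj, Set.mem_insert_iff, Set.mem_singleton_iff, Prod.mk.injEq]
  revert i j
  decide

theorem sigmaGraph_le_comap_swap :
    sigmaGraph ≤
      (sigmaGraph ⊔ SimpleGraph.edge 0 3).comap (Equiv.swap (0 : Fin 5) 4).toEmbedding := by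
  intro i j hij
  simp only [sigmaGraph, SimpleGraph.comap_adj, SimpleGraph.sup_adj, SimpleGraph.edge_adj,
    SimpleGraph.fromRel_adj, Set.mem_insert_iff, Set.mem_singleton_iff, Prod.mk.injEq,
    Equiv.coe_toEmbedding] at hij ⊢
  revert i j
  decide

/-- For every `k ∈ {2, 4, 6, 14}`, the graph `Σ` is `k`-equivalent to the
complete bipartite graph `K_{2,3}`. -/
theorem dla_sigmaGraph_eq_K23 (k : ℕ) (hk : k ∈ ({2, 4, 6, 14} : Set ℕ)) :
    dla k sigmaGraph = dla k K23Graph := by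
  have h03 : dla k (sigmaGraph ⊔ SimpleGraph.edge 0 3) = dla k sigmaGraph :=
    dla_sup_edge_eq_of_sigmaGraph_le_comap hk (Function.Embedding.refl _) le_rfl
  have h43 : dla k (sigmaGraph ⊔ SimpleGraph.edge 0 3 ⊔ SimpleGraph.edge 4 3) =
      dla k (sigmaGraph ⊔ SimpleGraph.edge 0 3) :=
    dla_sup_edge_eq_of_sigmaGraph_le_comap hk (Equiv.swap 0 4).toEmbedding
      sigmaGraph_le_comap_swap
  rw [K23Graph_eq_sup_edge, h43, h03]
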